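/- Let (K, K^∨) be a pair of dual reflexive Gorenstein cones of index k with deg^∨ = (1/2)(s_1 + ⋯ + s_{2r}) + t_1 + ⋯ + t_{k−r}, where the s_i, t_j ∈ K^∨_(1) are linearly independent, and let T = {x ∈ K : ⟨x, s_i⟩ = 1 and ⟨x, t_j⟩ = 1 for all i, j} − deg. Then the dilated polytope 2T = {2x : x ∈ T} is the convex hull of a finite set of lattice points (i.e., 2T has lattice vertices). -/

import Mathlib

open scoped BigOperators Pointwise

noncomputable section

/-- The standard pairing `⟨x, y⟩ = ∑ i, x i * y i` on `ℝ^d`. -/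
def pairR {d : ℕ} (x y : Fin d → ℝ) : ℝ := ∑ i, x i * y i

/-- A point of `ℝ^d` is a lattice point if all of its coordinates are integers. -/
def IsLatticePoint {d : ℕ} (x : Fin d → ℝ) : Prop := ∀ i, ∃ z : ℤ, x i = (z : ℝ)

/-- The dual cone `K^∨ = {y : ⟨x, y⟩ ≥ 0 for all x ∈ K}`. -/
def dualCone {d : ℕ} (K : Set (Fin d → ℝ)) : Set (Fin d → ℝ) :=
  { y | ∀ x ∈ K, 0 ≤ pairR x y }

/-- A Gorenstein cone with degree element `n` (a lattice point): the set of all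
nonnegative real linear combinations of a finite set of lattice points, each pairing
to `1` with `n`, such that `K ∩ (−K) = {0}` and `span K = ℝ^d`. -/
def IsGorensteinCone {d : ℕ} (K : Set (Fin d → ℝ)) (n : Fin d → ℝ) : Prop :=
  IsLatticePoint n ∧
  (∃ S : Finset (Fin d → ℝ),
      (∀ v ∈ S, IsLatticePoint v ∧ pairR v n = 1) ∧
      K = { x | ∃ c : (Fin d → ℝ) → ℝ, (∀ v, 0 ≤ c v) ∧ x = ∑ v ∈ S, c v • v }) ∧
  K ∩ (-K) = {0} ∧
  Submodule.span ℝ K = ⊤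

/-- `K_(1)`: the lattice points `m ∈ K` with `⟨m, deg^∨⟩ = 1`. -/
def Kone {d : ℕ} (K : Set (Fin d → ℝ)) (degVee : Fin d → ℝ) : Set (Fin d → ℝ) :=
  { m | IsLatticePoint m ∧ m ∈ K ∧ pairR m degVee = 1 }

/-- `K^∨_(1)`: the lattice points `n ∈ K^∨` with `⟨deg, n⟩ = 1`. -/
def KvOne {d : ℕ} (K : Set (Fin d → ℝ)) (deg : Fin d → ℝ) : Set (Fin d → ℝ) :=
  { n | IsLatticePoint n ∧ n ∈ dualCone K ∧ pairR deg n = 1 }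


/-!
Write the points of `K` as `∑ c_v v` with `c ≥ 0` over the generators `v ∈ K_(1)` of `K`. Then
`{x ∈ K : ⟨x, s_i⟩ = ⟨x, t_j⟩ = 1}` is the image of the polyhedron `{c ≥ 0 : ∑ c_v N_v = 1}`,
where the column `N_v = (⟨v, s_i⟩, ⟨v, t_j⟩)` is a nonnegative integer vector with
`∑_i ⟨v, s_i⟩ + 2 ∑_j ⟨v, t_j⟩ = 2 ⟨v, deg^∨⟩ = 2`, hence of ℓ¹-norm at most `2`. This polyhedron is
bounded, so it is the convex hull of its extreme points, and at an extreme point the columns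
in the support are linearly independent. For a linearly independent system of integer columns of
ℓ¹-norm at most `2` and integral right-hand side, the solution is half-integral: eliminate one
row by fraction-free column operations, which keep the columns integral of ℓ¹-norm at most `2`,
and induct on the number of columns. So the extreme points `e` are half-integral and
`2 (∑ e_v v - deg)` are lattice points whose convex hull is `2T`.
-/

open Filter Topology

section IntegerColumns

variable {ρ : Type*} [Fintype ρ] {a b : ρ → ℤ} {x : ρ}

lemma abs_add_abs_le_sum_abs {y : ρ} (hxy : x ≠ y) : |a x| + |a y| ≤ ∑ z, |a z| := by
  classical
  rw [← Finset.sum_pair (f := fun z => |a z|) hxy]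
  exact Finset.sum_le_univ_sum_of_nonneg fun _ => abs_nonneg _

lemma dvd_two_of_sum_abs_le_two (ha : ∑ y, |a y| ≤ 2) (hx : a x ≠ 0) : a x ∣ 2 := by
  have : |a x| ≤ 2 :=
    (Finset.single_le_sum (fun y _ => abs_nonneg (a y)) (Finset.mem_univ x)).trans ha
  rcases (show a x = 1 ∨ a x = -1 ∨ a x = 2 ∨ a x = -2 by grind) with h | h | h | h <;>
    rw [h] <;> decide

lemma dvd_of_sum_abs_le_two (ha : ∑ y, |a y| ≤ 2) (hx : a x ≠ 0) {y : ρ} (hxy : x ≠ y) :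
    a x ∣ a y := by
  have := (abs_add_abs_le_sum_abs (a := a) hxy).trans ha
  rcases (show (a x = 1 ∨ a x = -1) ∨ a y = 0 by grind) with (h | h) | h
  · rw [h]; exact one_dvd _
  · rw [h]; exact neg_dvd.2 (one_dvd _)
  · rw [h]; exact dvd_zero _

lemma sum_abs_sub_le_two (ha : ∑ y, |a y| ≤ 2) (hb : ∑ y, |b y| ≤ 2) (hax : a x ≠ 0)
    (hbx : b x ≠ 0) : ∑ y, |b x * a y - a x * b y| ≤ 2 := by
  set slack : ρ → ℤ := fun y => |b x| * |a y| + |a x| * |b y| - |b x * a y - a x * b y|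
  have hslack : ∀ y, 0 ≤ slack y := fun y => by
    have := abs_sub (b x * a y) (a x * b y)
    simp only [slack, abs_mul] at this ⊢
    linarith
  have hslack_x : slack x = 2 * (|a x| * |b x|) := by
    simp only [slack, mul_comm (b x), sub_self, abs_zero]; ring
  have hsum : slack x ≤ ∑ y, slack y :=
    Finset.single_le_sum (fun y _ => hslack y) (Finset.mem_univ x)
  simp only [slack, Finset.sum_sub_distrib, Finset.sum_add_distrib, ← Finset.mul_sum] at hsum
  -- the sum is at most `2 (|a x| + |b x| - |a x| |b x|)`, and `|a x|, |b x| ≥ 1`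
  have h1 := Int.one_le_abs hax
  have h2 := Int.one_le_abs hbx
  nlinarith

lemma sum_abs_ite_sub_le_two (ha : ∑ y, |a y| ≤ 2) (hb : ∑ y, |b y| ≤ 2) (hbx : b x ≠ 0) :
    ∑ y, |(if a x = 0 then 1 else b x) * a y - a x * b y| ≤ 2 := by
  by_cases hax : a x = 0
  · simpa [hax] using ha
  · simpa [hax] using sum_abs_sub_le_two ha hb hax hbx

lemma two_mul_mem_range_of_mul_eq (ha : ∑ y, |a y| ≤ 2) (hx : a x ≠ 0) {p q : ℝ}
    (hq : q ∈ (Int.castRingHom ℝ).range) (hp : p * a x = q) :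
    2 * p ∈ (Int.castRingHom ℝ).range := by
  obtain ⟨m, hm⟩ := dvd_two_of_sum_abs_le_two ha hx
  have : 2 * p = q * m := by
    rw [← hp, mul_assoc, ← Int.cast_mul, ← hm]; push_cast; ring
  rw [this]
  exact mul_mem hq ⟨m, rfl⟩

lemma sub_mul_mem_range_of_mul_eq (ha : ∑ y, |a y| ≤ 2) (hx : a x ≠ 0) {p : ℝ} {g : ρ → ℝ}
    (hg : ∀ y, g y ∈ (Int.castRingHom ℝ).range) (hp : p * a x = g x) (y : ρ) :
    g y - p * a y ∈ (Int.castRingHom ℝ).range := by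
  by_cases hxy : x = y
  · subst hxy
    simp [hp]
  obtain ⟨m, hm⟩ := dvd_of_sum_abs_le_two ha hx hxy
  have : g y - p * a y = g y - g x * m := by
    rw [hm, ← hp]; push_cast; ring
  rw [this]
  exact sub_mem (hg y) (mul_mem (hg x) ⟨m, rfl⟩)

end IntegerColumns

section Elimination

variable {ι K E : Type*} [DecidableEq ι] [AddCommGroup E]

lemma LinearIndepOn.smul_sub_smul_erase {R : Type*} [CommRing R] [NoZeroDivisors R]
    [Module R E] {f : ι → E} {F : Finset ι} (hf : LinearIndepOn R f F) {i : ι} (hi : i ∈ F)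
    {μ : ι → R} (hμ : ∀ v, μ v ≠ 0) (α : ι → R) :
    LinearIndepOn R (fun v => μ v • f v - α v • f i) (F.erase i) := by
  rw [linearIndepOn_finset_iff] at hf ⊢
  intro l hl v hv
  have hm := hf (Function.update (fun w => l w * μ w) i (-∑ w ∈ F.erase i, l w * α w)) ?_ v
    (Finset.mem_of_mem_erase hv)
  · rw [Function.update_of_ne (Finset.ne_of_mem_erase hv)] at hm
    exact (mul_eq_zero.1 hm).resolve_right (hμ v)
  have hrest : ∀ w ∈ F.erase i, Function.update (fun w => l w * μ w) i
      (-∑ w ∈ F.erase i, l w * α w) w • f w = (l w * μ w) • f w := fun w hw => by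
    rw [Function.update_of_ne (Finset.ne_of_mem_erase hw)]
  rw [← Finset.add_sum_erase F _ hi, Function.update_self, Finset.sum_congr rfl hrest]
  simp only [smul_sub, smul_smul, Finset.sum_sub_distrib, ← Finset.sum_smul] at hl
  rw [neg_smul, neg_add_eq_zero, eq_comm, ← sub_eq_zero, hl]

lemma Finset.sum_smul_eq_pivot_add [Field K] [Module K E] (F : Finset ι) {i : ι} (hi : i ∈ F)
    (c : ι → K) {μ : ι → K} (hμ : ∀ v, μ v ≠ 0) (α : ι → K) (f : ι → E) :
    ∑ v ∈ F, c v • f v = (c i + ∑ v ∈ F.erase i, c v / μ v * α v) • f i +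
      ∑ v ∈ F.erase i, (c v / μ v) • (μ v • f v - α v • f i) := by
  rw [← Finset.add_sum_erase F _ hi]
  simp only [smul_sub, smul_smul, Finset.sum_sub_distrib, ← Finset.sum_smul, add_smul,
    div_mul_cancel₀ _ (hμ _)]
  abel

end Elimination

theorem two_mul_mem_range_of_linearIndepOn {ι ρ : Type*} [Fintype ρ] [DecidableEq ι]
    (F : Finset ι) (N : ι → ρ → ℤ) (hN : ∀ v ∈ F, ∑ y, |N v y| ≤ 2)
    (hF : LinearIndepOn ℝ (fun v y => (N v y : ℝ)) F) (c : ι → ℝ) (g : ρ → ℝ)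
    (hg : ∀ y, g y ∈ (Int.castRingHom ℝ).range)
    (hc : ∑ v ∈ F, c v • (fun y => (N v y : ℝ)) = g) :
    ∀ v ∈ F, 2 * c v ∈ (Int.castRingHom ℝ).range := by
  induction F using Finset.strongInduction generalizing N c g with | H F ih => ?_
  rcases F.eq_empty_or_nonempty with rfl | ⟨i, hi⟩
  · simp
  obtain ⟨x, hx⟩ : ∃ x, N i x ≠ 0 := by
    by_contra! h
    exact hF.ne_zero hi (funext fun y => by simp [h y])
  -- Eliminate row `x` with pivot column `i`; a column missing row `x` is left alone, since
  -- scaling it by `N i x` could double its ℓ¹-norm.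
  set μ : ι → ℤ := fun v => if N v x = 0 then 1 else N i x with hμ_def
  have hμ : ∀ v, μ v ≠ 0 := fun v => by
    simp only [hμ_def]; split_ifs <;> simp [hx]
  set N' : ι → ρ → ℤ := fun v y => μ v * N v y - N v x * N i y with hN'_def
  have hN'x : ∀ v, N' v x = 0 := fun v => by
    simp only [hN'_def, hμ_def]; split_ifs with h <;> simp [h, mul_comm]
  have hcol : ∀ v, (fun y => (N' v y : ℝ)) =
      (μ v : ℝ) • (fun y => (N v y : ℝ)) - (N v x : ℝ) • fun y => (N i y : ℝ) := fun v => by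
    ext y; simp [hN'_def]
  set c' : ι → ℝ := fun v => c v / μ v
  set p := c i + ∑ v ∈ F.erase i, c' v * N v x
  have hsplit : g = p • (fun y => (N i y : ℝ)) + ∑ v ∈ F.erase i, c' v • fun y => (N' v y : ℝ) := by
    simp only [hcol, ← hc]
    exact Finset.sum_smul_eq_pivot_add F hi c (by exact_mod_cast hμ) _ _
  have hp : p * N i x = g x := by
    have := congrFun hsplit x
    simp [Finset.sum_apply, hN'x] at this
    linarith
  have ih' := ih _ (Finset.erase_ssubset hi) N'
    (fun v hv => sum_abs_ite_sub_le_two (hN v (Finset.mem_of_mem_erase hv)) (hN i hi) hx)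
    (by rw [show (fun v y => (N' v y : ℝ)) = _ from funext hcol]
        exact hF.smul_sub_smul_erase hi (μ := fun v => (μ v : ℝ)) (by exact_mod_cast hμ) _)
    c' (g - p • fun y => (N i y : ℝ)) (sub_mul_mem_range_of_mul_eq (hN i hi) hx hg hp)
    (by rw [hsplit, add_sub_cancel_left])
  intro v hv
  by_cases hvi : v = i
  · subst hvi
    have : 2 * c v = 2 * p - ∑ w ∈ F.erase v, 2 * c' w * N w x := by
      simp only [p, mul_add, Finset.mul_sum, mul_assoc]; ring
    rw [this]
    exact sub_mem (two_mul_mem_range_of_mul_eq (hN v hv) hx (hg x) hp)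
      (sum_mem fun w hw => mul_mem (ih' w hw) ⟨_, rfl⟩)
  · have : 2 * c v = μ v * (2 * c' v) := by
      simp only [c']; field_simp [(by exact_mod_cast hμ v : (μ v : ℝ) ≠ 0)]
    rw [this]
    exact mul_mem ⟨_, rfl⟩ (ih' v (Finset.mem_erase.2 ⟨hvi, hv⟩))

section Polyhedron

variable {ι E : Type*} [Fintype ι] [AddCommGroup E] [Module ℝ E]

def stdFormPolyhedron (N : ι → E) (b : E) : Set (ι → ℝ) :=
  {c | 0 ≤ c ∧ ∑ v, c v • N v = b}

lemma stdFormPolyhedron_eq (N : ι → E) (b : E) :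
    stdFormPolyhedron N b = Set.Ici 0 ∩ Fintype.linearCombination ℝ N ⁻¹' {b} := by
  ext c
  simp [stdFormPolyhedron, Fintype.linearCombination_apply]

lemma convex_stdFormPolyhedron (N : ι → E) (b : E) : Convex ℝ (stdFormPolyhedron N b) := by
  rw [stdFormPolyhedron_eq]
  exact (convex_Ici 0).inter ((convex_singleton b).linear_preimage _)

lemma isClosed_stdFormPolyhedron [TopologicalSpace E] [IsTopologicalAddGroup E]
    [ContinuousSMul ℝ E] [T2Space E] (N : ι → E) (b : E) :
    IsClosed (stdFormPolyhedron N b) := by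
  rw [stdFormPolyhedron_eq]
  exact isClosed_Ici.inter (isClosed_singleton.preimage (LinearMap.continuous_on_pi _))

lemma eventually_nonneg_add_smul {e l : ι → ℝ} (he : 0 ≤ e) (hl : ∀ v, e v = 0 → l v = 0) :
    ∀ᶠ t in 𝓝 (0 : ℝ), 0 ≤ e + t • l := by
  simp only [Pi.le_def, Filter.eventually_all]
  intro v
  rcases (he v).eq_or_lt with hv | hv
  · simp [← hv, hl v hv.symm]
  · have : Tendsto (fun t : ℝ => e v + t * l v) (𝓝 0) (𝓝 (e v)) :=
      (continuous_const.add (continuous_id.mul continuous_const)).tendsto' _ _ (by simp)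
    simpa using this.eventually_const_le hv

lemma eq_zero_of_mem_extremePoints_stdFormPolyhedron {N : ι → E} {b : E} {e l : ι → ℝ}
    (he : e ∈ (stdFormPolyhedron N b).extremePoints ℝ) (hl : ∀ v, e v = 0 → l v = 0)
    (hlN : ∑ v, l v • N v = 0) : l = 0 := by
  obtain ⟨⟨he0, heN⟩, hext⟩ := mem_extremePoints.1 he
  have hmem : ∀ᶠ t in 𝓝 (0 : ℝ), 0 ≤ e + t • l ∧ 0 ≤ e + (-t) • l :=
    (eventually_nonneg_add_smul he0 hl).and
      ((continuous_neg.tendsto' 0 0 neg_zero).eventually (eventually_nonneg_add_smul he0 hl))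
  obtain ⟨t, ⟨hpos, hneg⟩, ht⟩ := ((hmem.filter_mono nhdsWithin_le_nhds).and
    (self_mem_nhdsWithin (s := {0}ᶜ))).exists
  have hsum : ∀ s : ℝ, ∑ v, (e + s • l) v • N v = b := fun s => by
    simp [add_smul, Finset.sum_add_distrib, heN, mul_smul, ← Finset.smul_sum, hlN]
  have hseg : e ∈ openSegment ℝ (e + t • l) (e + (-t) • l) :=
    ⟨1 / 2, 1 / 2, by norm_num, by norm_num, by norm_num, by module⟩
  have := (hext _ ⟨hpos, hsum t⟩ _ ⟨hneg, hsum (-t)⟩ hseg).1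
  simpa [show t ≠ 0 from ht] using this

lemma linearIndepOn_support_of_mem_extremePoints_stdFormPolyhedron {N : ι → E} {b : E}
    {e : ι → ℝ} (he : e ∈ (stdFormPolyhedron N b).extremePoints ℝ) :
    LinearIndepOn ℝ N (Function.support e) := by
  rw [linearIndepOn_iff]
  intro l hl hlN
  rw [Finsupp.mem_supported'] at hl
  rw [Finsupp.linearCombination_apply, Finsupp.sum_fintype _ _ (by simp)] at hlN
  exact DFunLike.coe_injective (eq_zero_of_mem_extremePoints_stdFormPolyhedron he
    (fun v hv => hl v (by simpa using hv)) hlN)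

end Polyhedron

section HalfIntegralPolyhedron

variable {ι ρ : Type*} [Fintype ι] [Fintype ρ]

lemma Bornology.IsBounded.finite_setOf_two_mul_mem_range {s : Set (ι → ℝ)}
    (hs : Bornology.IsBounded s) :
    {c ∈ s | ∀ v, 2 * c v ∈ (Int.castRingHom ℝ).range}.Finite := by
  refine ((ZSpan.setFinite_inter (Pi.basisFun ℝ ι) (hs.smul₀ (2 : ℝ))).preimage
    (smul_right_injective _ (two_ne_zero (α := ℝ))).injOn).subset ?_
  rintro c ⟨hc, h2⟩
  refine ⟨Set.smul_mem_smul_set hc, ?_⟩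
  rw [SetLike.mem_coe, Module.Basis.mem_span_iff_repr_mem]
  intro v
  simpa [eq_comm] using h2 v

lemma isBounded_stdFormPolyhedron {N : ι → ρ → ℝ} {b : ρ → ℝ} (ω : ρ → ℝ)
    (hω : ∀ v, ω ⬝ᵥ N v = 1) : Bornology.IsBounded (stdFormPolyhedron N b) := by
  refine (Metric.isBounded_Icc (0 : ι → ℝ) fun _ => ω ⬝ᵥ b).subset ?_
  rintro c ⟨hc0, hcb⟩
  refine ⟨hc0, fun v => ?_⟩
  calc c v ≤ ∑ w, c w := Finset.single_le_sum (fun w _ => hc0 w) (Finset.mem_univ v)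
    _ = ω ⬝ᵥ b := by simp [← hcb, dotProduct_sum, dotProduct_smul, hω]

theorem exists_finite_halfIntegral_convexHull_eq_stdFormPolyhedron (N : ι → ρ → ℤ)
    (hN : ∀ v, ∑ y, |N v y| ≤ 2) {b : ρ → ℝ} (hb : ∀ y, b y ∈ (Int.castRingHom ℝ).range)
    (hC : Bornology.IsBounded (stdFormPolyhedron (fun v y => (N v y : ℝ)) b)) :
    ∃ V : Set (ι → ℝ), V.Finite ∧ (∀ e ∈ V, ∀ v, 2 * e v ∈ (Int.castRingHom ℝ).range) ∧
      stdFormPolyhedron (fun v y => (N v y : ℝ)) b = convexHull ℝ V := by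
  classical
  set C := stdFormPolyhedron (fun v y => (N v y : ℝ)) b
  have hhalf : ∀ e ∈ C.extremePoints ℝ, ∀ v, 2 * e v ∈ (Int.castRingHom ℝ).range := by
    intro e he v
    by_cases hv : e v = 0
    · simp [hv]
    set F := Finset.univ.filter fun v => e v ≠ 0
    have hF : (F : Set ι) = Function.support e := by ext; simp [F]
    refine two_mul_mem_range_of_linearIndepOn F N (fun v _ => hN v)
      (hF ▸ linearIndepOn_support_of_mem_extremePoints_stdFormPolyhedron he) e b hb ?_ v
      (by simpa [F] using hv)
    rw [Finset.sum_filter_of_ne fun v _ h => left_ne_zero_of_smul h]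
    exact he.1.2
  have hfin : (C.extremePoints ℝ).Finite :=
    hC.finite_setOf_two_mul_mem_range.subset fun e he => ⟨he.1, hhalf e he⟩
  refine ⟨_, hfin, hhalf, ?_⟩
  rw [← (hfin.isClosed_convexHull (𝕜 := ℝ)).closure_eq, closure_convexHull_extremePoints
    (Metric.isCompact_of_isClosed_isBounded (isClosed_stdFormPolyhedron _ _) hC)
    (convex_stdFormPolyhedron _ _)]

end HalfIntegralPolyhedron
section Cone

variable {d : ℕ} {ρ : Type*}

lemma pairR_eq_dotProduct (x y : Fin d → ℝ) : pairR x y = x ⬝ᵥ y := rfl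

lemma isLatticePoint_iff {x : Fin d → ℝ} :
    IsLatticePoint x ↔ ∀ i, x i ∈ (Int.castRingHom ℝ).range := by
  simp [IsLatticePoint, eq_comm]

lemma IsLatticePoint.pairR_mem_range {x y : Fin d → ℝ} (hx : IsLatticePoint x)
    (hy : IsLatticePoint y) : pairR x y ∈ (Int.castRingHom ℝ).range :=
  sum_mem fun i _ => mul_mem (isLatticePoint_iff.1 hx i) (isLatticePoint_iff.1 hy i)

lemma setOf_exists_nonneg_sum_smul_eq_image {E : Type*} [AddCommGroup E] [Module ℝ E]
    (S : Finset E) :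
    {x | ∃ c : E → ℝ, (∀ v, 0 ≤ c v) ∧ x = ∑ v ∈ S, c v • v} =
      Fintype.linearCombination ℝ (fun v : S => (v : E)) '' Set.Ici 0 := by
  classical
  ext x
  simp only [Set.mem_ofPred_eq, Set.mem_image, Set.mem_Ici, Fintype.linearCombination_apply]
  constructor
  · rintro ⟨c, hc, rfl⟩
    exact ⟨fun v => c v, fun v => hc v, S.sum_coe_sort fun v => c v • v⟩
  · rintro ⟨c, hc, rfl⟩
    refine ⟨fun u => if h : u ∈ S then c ⟨u, h⟩ else 0, fun u => ?_, ?_⟩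
    · dsimp only
      split_ifs
      exacts [hc _, le_rfl]
    · rw [← S.sum_coe_sort]
      simp

lemma mem_setOf_exists_nonneg_sum_smul_eq {E : Type*} [AddCommGroup E] [Module ℝ E]
    {S : Finset E} {v : E} (hv : v ∈ S) :
    v ∈ {x | ∃ c : E → ℝ, (∀ v, 0 ≤ c v) ∧ x = ∑ v ∈ S, c v • v} := by
  classical
  exact ⟨fun u => if u = v then 1 else 0, fun u => by dsimp only; split_ifs <;> norm_num,
    by simp [ite_smul, hv]⟩

lemma setOf_mem_cone_pairR_eq_one_eq_image (S : Finset (Fin d → ℝ)) (σ : ρ → Fin d → ℝ) :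
    {x | (∃ c : (Fin d → ℝ) → ℝ, (∀ v, 0 ≤ c v) ∧ x = ∑ v ∈ S, c v • v) ∧
        ∀ y, pairR x (σ y) = 1} =
      Fintype.linearCombination ℝ (fun v : S => (v : Fin d → ℝ)) ''
        stdFormPolyhedron (fun v y => pairR v (σ y)) 1 := by
  rw [Set.ofPred_and, setOf_exists_nonneg_sum_smul_eq_image, ← Set.image_inter_preimage]
  congr 1
  ext c
  simp [stdFormPolyhedron, funext_iff, Fintype.linearCombination_apply, pairR_eq_dotProduct,
    sum_dotProduct, smul_dotProduct]

lemma pairR_eq_sum_elim {α β : Type*} [Fintype α] [Fintype β] {s : α → Fin d → ℝ}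
    {t : β → Fin d → ℝ} {degVee : Fin d → ℝ} (hdec : degVee = (2⁻¹ : ℝ) • (∑ i, s i) + ∑ j, t j)
    (x : Fin d → ℝ) :
    pairR x degVee = ∑ y, Sum.elim (fun _ => 2⁻¹) (fun _ => 1) y * pairR x (Sum.elim s t y) := by
  simp [hdec, pairR_eq_dotProduct, dotProduct_add, dotProduct_smul, dotProduct_sum,
    Fintype.sum_sum_type, Finset.mul_sum]

lemma sum_abs_le_two_of_dotProduct_eq_one [Fintype ρ] {a : ρ → ℤ} (ha : 0 ≤ a) {ω : ρ → ℝ}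
    (hω : ∀ y, 2⁻¹ ≤ ω y) (h : ω ⬝ᵥ (fun y => (a y : ℝ)) = 1) : ∑ y, |a y| ≤ 2 := by
  have : ((∑ y, |a y| : ℤ) : ℝ) ≤ 2 :=
    calc ((∑ y, |a y| : ℤ) : ℝ) = ∑ y, (a y : ℝ) := by simp [abs_of_nonneg (ha _)]
      _ ≤ ∑ y, 2 * (ω y * a y) := Finset.sum_le_sum fun y _ => by
          nlinarith [hω y, (by exact_mod_cast ha y : (0 : ℝ) ≤ a y)]
      _ = 2 := by rw [← Finset.mul_sum, ← dotProduct, h, mul_one]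
  exact_mod_cast this

lemma dotProduct_eq_one_and_sum_abs_le_two {α β : Type*} [Fintype α] [Fintype β]
    {s : α → Fin d → ℝ} {t : β → Fin d → ℝ} {degVee : Fin d → ℝ}
    (hdec : degVee = (2⁻¹ : ℝ) • (∑ i, s i) + ∑ j, t j) {v : Fin d → ℝ}
    (hv : pairR v degVee = 1) (hst : ∀ y, 0 ≤ pairR v (Sum.elim s t y)) {a : α ⊕ β → ℤ}
    (ha : ∀ y, (a y : ℝ) = pairR v (Sum.elim s t y)) :
    Sum.elim (fun _ => 2⁻¹) (fun _ => 1) ⬝ᵥ (fun y => (a y : ℝ)) = 1 ∧ ∑ y, |a y| ≤ 2 := by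
  have hω : Sum.elim (fun _ => 2⁻¹) (fun _ => 1) ⬝ᵥ (fun y => (a y : ℝ)) = 1 := by
    rw [pairR_eq_sum_elim hdec] at hv
    simpa only [dotProduct, ha] using hv
  refine ⟨hω, sum_abs_le_two_of_dotProduct_eq_one (fun y => ?_)
    (Sum.forall.2 ⟨fun _ => le_rfl, fun _ => by norm_num⟩) hω⟩
  exact_mod_cast (ha y).symm ▸ hst y

lemma isLatticePoint_two_smul_sum_sub {S : Finset (Fin d → ℝ)} (hS : ∀ v ∈ S, IsLatticePoint v)
    {deg : Fin d → ℝ} (hdeg : IsLatticePoint deg) {e : S → ℝ}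
    (he : ∀ v, 2 * e v ∈ (Int.castRingHom ℝ).range) :
    IsLatticePoint ((2 : ℝ) • (∑ v, e v • (v : Fin d → ℝ) - deg)) := by
  rw [isLatticePoint_iff]
  intro i
  have : ((2 : ℝ) • (∑ v, e v • (v : Fin d → ℝ) - deg)) i =
      ∑ v, 2 * e v * (v : Fin d → ℝ) i - 2 * deg i := by
    simp [Finset.sum_apply, Finset.mul_sum, mul_sub, mul_assoc]
  rw [this]
  exact sub_mem (sum_mem fun v _ => mul_mem (he v) (isLatticePoint_iff.1 (hS v v.2) i))
    (mul_mem ⟨2, by simp⟩ (isLatticePoint_iff.1 hdeg i))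

end Cone

theorem stmt16_general {d k r : ℕ} (K : Set (Fin d → ℝ)) (deg degVee : Fin d → ℝ)
    (hK : IsGorensteinCone K degVee) (hKv : IsGorensteinCone (dualCone K) deg)
    (s : Fin (2 * r) → (Fin d → ℝ)) (t : Fin (k - r) → (Fin d → ℝ))
    (hs : ∀ i, s i ∈ KvOne K deg) (ht : ∀ j, t j ∈ KvOne K deg)
    (hdec : degVee = (2⁻¹ : ℝ) • (∑ i, s i) + ∑ j, t j)
    (T : Set (Fin d → ℝ))
    (hT : T = (fun x => x - deg) ''
      { x | x ∈ K ∧ (∀ i, pairR x (s i) = 1) ∧ (∀ j, pairR x (t j) = 1) }) :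
    ∃ V : Finset (Fin d → ℝ), (∀ v ∈ V, IsLatticePoint v) ∧
      (2 : ℝ) • T = convexHull ℝ (V : Set (Fin d → ℝ)) := by
  obtain ⟨-, ⟨S, hS, rfl⟩, -, -⟩ := hK
  have hσ : ∀ y, Sum.elim s t y ∈ KvOne _ deg := Sum.forall.2 ⟨hs, ht⟩
  choose N hN using fun (v : S) y => (hS v v.2).1.pairR_mem_range (hσ y).1
  simp only [eq_intCast] at hN
  have hcols := fun v : S => dotProduct_eq_one_and_sum_abs_le_two hdec (hS v v.2).2
    (fun y => (hσ y).2.1 v (mem_setOf_exists_nonneg_sum_smul_eq v.2)) (hN v)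
  obtain ⟨V, hVfin, hVhalf, hCV⟩ := exists_finite_halfIntegral_convexHull_eq_stdFormPolyhedron N
    (fun v => (hcols v).2) (b := 1) (fun _ => one_mem _)
    (isBounded_stdFormPolyhedron _ fun v => (hcols v).1)
  set L := Fintype.linearCombination ℝ (fun v : S => (v : Fin d → ℝ))
  let A : (S → ℝ) →ᵃ[ℝ] (Fin d → ℝ) := (2 : ℝ) • (L.toAffineMap - AffineMap.const ℝ _ deg)
  have h2T : (2 : ℝ) • T = A '' stdFormPolyhedron (fun v y => (N v y : ℝ)) 1 := by
    have hP := setOf_mem_cone_pairR_eq_one_eq_image S (Sum.elim s t)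
    simp only [Sum.forall, Sum.elim_inl, Sum.elim_inr] at hP
    simp only [Set.mem_ofPred_eq] at hT
    rw [hT, hP, show (fun (v : S) y => (N v y : ℝ)) = _ from funext₂ hN, ← Set.image_smul,
      Set.image_image, Set.image_image]
    rfl
  refine ⟨(hVfin.image A).toFinset, fun x hx => ?_, ?_⟩
  · obtain ⟨e, he, rfl⟩ := (hVfin.image A).mem_toFinset.1 hx
    exact isLatticePoint_two_smul_sum_sub (fun v hv => (hS v hv).1) hKv.1 (hVhalf e he)
  · rw [h2T, hCV, A.image_convexHull, Set.Finite.coe_toFinset]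

/-- With `deg^∨ = (1/2)(s_1 + ⋯ + s_{2r}) + t_1 + ⋯ + t_{k−r}` and
`T = {x ∈ K : ⟨x, s_i⟩ = ⟨x, t_j⟩ = 1 ∀ i, j} − deg`, the dilated polytope
`2T = {2x : x ∈ T}` is the convex hull of a finite set of lattice points. -/
theorem stmt16 {d k r : ℕ} (hrk : r ≤ k) (K : Set (Fin d → ℝ)) (deg degVee : Fin d → ℝ)
    (hK : IsGorensteinCone K degVee) (hKv : IsGorensteinCone (dualCone K) deg)
    (hk : pairR deg degVee = (k : ℝ))
    (s : Fin (2 * r) → (Fin d → ℝ)) (t : Fin (k - r) → (Fin d → ℝ))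
    (hs : ∀ i, s i ∈ KvOne K deg) (ht : ∀ j, t j ∈ KvOne K deg)
    (hli : LinearIndependent ℝ (Sum.elim s t))
    (hdec : degVee = (2⁻¹ : ℝ) • (∑ i, s i) + ∑ j, t j)
    (T : Set (Fin d → ℝ))
    (hT : T = (fun x => x - deg) ''
      { x | x ∈ K ∧ (∀ i, pairR x (s i) = 1) ∧ (∀ j, pairR x (t j) = 1) }) :
    ∃ V : Finset (Fin d → ℝ), (∀ v ∈ V, IsLatticePoint v) ∧
      (2 : ℝ) • T = convexHull ℝ (V : Set (Fin d → ℝ)) :=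
  stmt16_general K deg degVee hK hKv s t hs ht hdec T hT
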